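/- For any set a, pot(a) ∉ a. -/

import Mathlib

def pot (a : ZFSet) : ZFSet :=
  ZFSet.sep (fun x => ∃ c ∈ a, x ⊆ c) (ZFSet.powerset (ZFSet.sUnion a))

def Potent (a : ZFSet) : Prop := ∀ x, (∃ c, x ⊆ c ∧ c ∈ a) → x ∈ a

def IsHistory (h : ZFSet) : Prop := ∀ x ∈ h, x = pot (x ∩ h)

def IsLevel (s : ZFSet) : Prop := ∃ h, IsHistory h ∧ s = pot h

theorem mem_pot {a x : ZFSet} : x ∈ pot a ↔ ∃ c ∈ a, x ⊆ c := by
  rw [pot, ZFSet.mem_sep, ZFSet.mem_powerset, and_iff_right_iff_imp]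
  rintro ⟨c, hca, hxc⟩ y hy
  exact ZFSet.mem_sUnion.mpr ⟨c, hca, hxc hy⟩

theorem mem_pot_of_subset_of_mem {a c x : ZFSet} (hc : c ∈ a) (hx : x ⊆ c) : x ∈ pot a :=
  mem_pot.mpr ⟨c, hc, hx⟩

/-- Russell's argument: the witness is `{x ∈ s | x ∉ x}`, so Foundation is not needed. -/
theorem ZFSet.exists_subset_notMem (s : ZFSet) : ∃ d ⊆ s, d ∉ s := by
  refine ⟨s.sep (fun x => x ∉ x), fun x hx => (ZFSet.mem_sep.mp hx).1, fun hds => ?_⟩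
  by_cases hdd : s.sep (fun x => x ∉ x) ∈ s.sep (fun x => x ∉ x)
  · exact (ZFSet.mem_sep.mp hdd).2 hdd
  · exact hdd (ZFSet.mem_sep.mpr ⟨hds, hdd⟩)

theorem stmt13 (a : ZFSet) : pot a ∉ a := by
  intro hpot
  obtain ⟨d, hd, hdpot⟩ := ZFSet.exists_subset_notMem (pot a)
  exact hdpot (mem_pot_of_subset_of_mem hpot hd)
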